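/- arXiv:1211.4204 — 2 statements merged into one kernel-verified Lean document; each statement's English description precedes it below -/
import Mathlib

section
/- Let R be a commutative noetherian ring and let S be a Serre class of R-modules. Then S contains a nonzero R-module if and only if there exists a maximal ideal m of R such that the R-module R/m belongs to S. -/
universe u

open CategoryTheory

/-- A Serre class of `R`-modules: a class of `R`-modules closed under isomorphisms,
submodules, quotient modules, and extensions. Closure under isomorphisms follows from
closure under submodules (via injective maps). -/
structure SerreClass (R : Type u) [CommRing R] : Type (u + 1) where
  /-- membership predicate -/
  Mem : ∀ (M : Type u) [AddCommGroup M] [Module R M], Prop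
  /-- closed under submodules (hence under isomorphisms) -/
  mem_of_injective :
    ∀ {M N : Type u} [AddCommGroup M] [Module R M] [AddCommGroup N] [Module R N]
      (f : M →ₗ[R] N), Function.Injective f → Mem N → Mem M
  /-- closed under quotient modules (hence under isomorphisms) -/
  mem_of_surjective :
    ∀ {M N : Type u} [AddCommGroup M] [Module R M] [AddCommGroup N] [Module R N]
      (f : M →ₗ[R] N), Function.Surjective f → Mem M → Mem N
  /-- closed under extensions -/
  mem_of_extension :
    ∀ {M : Type u} [AddCommGroup M] [Module R M] (N : Submodule R M),
      Mem N → Mem (M ⧸ N) → Mem M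

/-! A nonzero `x ∈ M` gives the cyclic submodule `R ⧸ ker (r ↦ r • x)` of `M`, and this
surjects onto `R ⧸ m` for any maximal ideal `m` containing the (proper) kernel. -/

namespace SerreClass

variable {R : Type u} [CommRing R] (S : SerreClass R)

theorem mem_quotient_ker {M N : Type u} [AddCommGroup M] [Module R M] [AddCommGroup N]
    [Module R N] (f : M →ₗ[R] N) (hN : S.Mem N) : S.Mem (M ⧸ LinearMap.ker f) :=
  S.mem_of_injective ((LinearMap.ker f).liftQ f le_rfl)
    (LinearMap.ker_eq_bot.mp (Submodule.ker_liftQ_eq_bot _ _ _ le_rfl)) hN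

theorem mem_quotient_of_le {M : Type u} [AddCommGroup M] [Module R M] {p q : Submodule R M}
    (h : p ≤ q) (hp : S.Mem (M ⧸ p)) : S.Mem (M ⧸ q) :=
  S.mem_of_surjective (Submodule.factor h) (Submodule.factor_surjective h) hp

theorem exists_isMaximal_mem_quotient {M : Type u} [AddCommGroup M] [Module R M]
    [Nontrivial M] (hM : S.Mem M) : ∃ m : Ideal R, m.IsMaximal ∧ S.Mem (R ⧸ m) := by
  obtain ⟨x, hx⟩ := exists_ne (0 : M)
  have hker : LinearMap.ker (LinearMap.toSpanSingleton R M x) ≠ ⊤ := by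
    rwa [Ne, LinearMap.ker_eq_top, LinearMap.toSpanSingleton_eq_zero_iff]
  obtain ⟨m, hm, hle⟩ := Ideal.exists_le_maximal _ hker
  exact ⟨m, hm, S.mem_quotient_of_le hle (S.mem_quotient_ker _ hM)⟩

end SerreClass

theorem stmt0_general (R : Type u) [CommRing R] (S : SerreClass R) :
    (∃ (M : Type u) (_ : AddCommGroup M) (_ : Module R M), Nontrivial M ∧ S.Mem M) ↔
      ∃ m : Ideal R, m.IsMaximal ∧ S.Mem (R ⧸ m) := by
  constructor
  · rintro ⟨M, _, _, _, hM⟩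
    exact S.exists_isMaximal_mem_quotient hM
  · rintro ⟨m, hm, hmem⟩
    exact ⟨R ⧸ m, inferInstance, inferInstance,
      Submodule.Quotient.nontrivial_iff.mpr hm.ne_top, hmem⟩

/-- Let `R` be a commutative noetherian ring and let `S` be a Serre class of `R`-modules.
Then `S` contains a nonzero `R`-module if and only if there exists a maximal ideal `m` of `R`
such that the `R`-module `R/m` belongs to `S`. -/
theorem stmt0 (R : Type u) [CommRing R] [IsNoetherianRing R] (S : SerreClass R) :
    (∃ (M : Type u) (_ : AddCommGroup M) (_ : Module R M), Nontrivial M ∧ S.Mem M) ↔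
      ∃ m : Ideal R, m.IsMaximal ∧ S.Mem (R ⧸ m) :=
  stmt0_general R S
end

section
/- Let R be a commutative noetherian ring and let S be a Serre class of R-modules such that R/m belongs to S for every maximal ideal m of R. If M is a minimax R-module, then the R-module Ext^j_R(R/m, M) belongs to S for every maximal ideal m of R and every integer j ≥ 0. -/
universe u

open CategoryTheory Opposite

/-- An `R`-module `M` is *minimax* if it has a finitely generated submodule `N`
such that `M/N` is artinian. -/
def IsMinimax (R : Type u) [CommRing R] (M : Type u) [AddCommGroup M] [Module R M] : Prop :=
  ∃ N : Submodule R M, N.FG ∧ IsArtinian R (M ⧸ N)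

/-!
Computing `Ext^j(R/m, M)` with a resolution of `R/m` by finite free modules exhibits it as a
subquotient of `Hom(R^k, M) ≅ M^k`, hence as a minimax module. Multiplication by `r ∈ m` is zero
on `R/m`, so it lifts to a null-homotopic endomorphism of any projective resolution, and therefore
`m` kills `Ext^j(R/m, M)`. A module killed by a maximal ideal is semisimple, and a semisimple
minimax module has finite length; a module of finite length lies in `S`, being an iterated
extension of simple modules `R/m'`.
-/

lemma SerreClass.mem_of_linearEquiv {R : Type u} [CommRing R] (S : SerreClass R)
    {M N : Type u} [AddCommGroup M] [Module R M] [AddCommGroup N] [Module R N] (e : M ≃ₗ[R] N)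
    (h : S.Mem M) : S.Mem N :=
  S.mem_of_surjective e.toLinearMap e.surjective h

lemma SerreClass.mem_of_isFiniteLength {R : Type u} [CommRing R] (S : SerreClass R)
    (hS : ∀ m : Ideal R, m.IsMaximal → S.Mem (R ⧸ m)) (m : Ideal R) (hm : m.IsMaximal)
    {V : Type u} [AddCommGroup V] [Module R V] (h : IsFiniteLength R V) : S.Mem V := by
  induction h with
  | of_subsingleton =>
    exact S.mem_of_surjective 0 (fun _ => ⟨0, Subsingleton.elim _ _⟩) (hS m hm)
  | @of_simple_quotient _ _ _ N hsimple _ ih =>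
    obtain ⟨m', hm', ⟨e⟩⟩ := isSimpleModule_iff_quot_maximal.mp hsimple
    exact S.mem_of_extension N ih (S.mem_of_linearEquiv e.symm (hS m' hm'))

lemma Module.IsTorsionBySet.isSemisimpleModule {R V : Type*} [CommRing R] [AddCommGroup V]
    [Module R V] {m : Ideal R} [m.IsMaximal] (h : Module.IsTorsionBySet R V m) :
    IsSemisimpleModule R V := by
  let := Ideal.Quotient.field m
  let := h.module
  exact h.isSemisimpleModule_iff.mp inferInstance

namespace IsMinimax

variable {R : Type u} [CommRing R] {V W : Type u} [AddCommGroup V] [Module R V]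
  [AddCommGroup W] [Module R W]

lemma of_surjective (h : IsMinimax R V) (f : V →ₗ[R] W) (hf : Function.Surjective f) :
    IsMinimax R W := by
  obtain ⟨N, hfg, hart⟩ := h
  refine ⟨N.map f, hfg.map f,
    isArtinian_of_surjective _ (N.mapQ _ f (Submodule.le_comap_map f N)) ?_⟩
  rw [← LinearMap.range_eq_top, Submodule.range_mapQ, LinearMap.range_eq_top.mpr hf,
    Submodule.map_top, Submodule.range_mkQ]

lemma of_linearEquiv (h : IsMinimax R V) (e : V ≃ₗ[R] W) : IsMinimax R W :=
  h.of_surjective e.toLinearMap e.surjective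

lemma of_injective [IsNoetherianRing R] (h : IsMinimax R W) (f : V →ₗ[R] W)
    (hf : Function.Injective f) : IsMinimax R V := by
  obtain ⟨N, hfg, hart⟩ := h
  refine ⟨N.comap f,
    Submodule.fg_of_fg_map_injective f hf (hfg.of_le (Submodule.map_comap_le f N)), ?_⟩
  have hker : LinearMap.ker (N.mkQ ∘ₗ f) = N.comap f := by
    rw [LinearMap.ker_comp, Submodule.ker_mkQ]
  exact isArtinian_of_linearEquiv
    ((Submodule.quotEquivOfEq _ _ hker.symm).trans (N.mkQ ∘ₗ f).quotKerEquivRange).symm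

lemma pi (h : IsMinimax R V) (k : ℕ) : IsMinimax R (Fin k → V) := by
  obtain ⟨N, hfg, hart⟩ := h
  exact ⟨Submodule.pi Set.univ fun _ => N, Submodule.fg_pi fun _ => hfg,
    isArtinian_of_linearEquiv (Submodule.quotientPi fun _ => N).symm⟩

lemma linearMap [IsNoetherianRing R] (h : IsMinimax R W) [Module.Finite R V] :
    IsMinimax R (V →ₗ[R] W) := by
  obtain ⟨k, π, hπ⟩ := Module.Finite.exists_fin' R V
  let e := LinearEquiv.piRing R W (Fin k) R
  exact (h.pi k).of_injective (e.toLinearMap ∘ₗ LinearMap.lcomp R W π)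
    (e.injective.comp fun _ _ hfg => (LinearMap.cancel_right hπ).mp hfg)

lemma isFiniteLength [IsSemisimpleModule R V] (h : IsMinimax R V) : IsFiniteLength R V := by
  obtain ⟨N, hfg, hart⟩ := h
  have : Module.Finite R N := Module.Finite.iff_fg.mpr hfg
  have : IsNoetherian R (V ⧸ N) := (IsSemisimpleModule.finite_tfae.out 2 1).mp hart
  rw [isFiniteLength_iff_isNoetherian_isArtinian]
  exact ⟨(isNoetherian_iff_submodule_quotient N).mpr ⟨inferInstance, inferInstance⟩,
    (isArtinian_iff_submodule_quotient N).mpr ⟨inferInstance, hart⟩⟩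

lemma homology [IsNoetherianRing R] {ι : Type*} {c : ComplexShape ι}
    {K : HomologicalComplex (ModuleCat.{u} R) c} {i : ι} (h : IsMinimax R (K.X i)) :
    IsMinimax R (K.homology i) :=
  (h.of_injective (K.iCycles i).hom
    ((ModuleCat.mono_iff_injective _).mp inferInstance)).of_surjective
      (K.homologyπ i).hom ((ModuleCat.epi_iff_surjective _).mp inferInstance)

end IsMinimax

section Linear

variable {R : Type*} [CommRing R] {C : Type*} [Category C] [Preadditive C] [Linear R C]

lemma CategoryTheory.Iso.smul_id_eq_zero {A B : C} (e : A ≅ B) {r : R} (h : r • 𝟙 A = 0) :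
    r • 𝟙 B = 0 :=
  calc r • 𝟙 B = e.inv ≫ (r • 𝟙 A) ≫ e.hom := by simp
    _ = 0 := by simp [h]

lemma HomologicalComplex.homologyMap_smul {ι : Type*} {c : ComplexShape ι}
    {K L : HomologicalComplex C c} (r : R) (φ : K ⟶ L) (i : ι) [K.HasHomology i]
    [L.HasHomology i] : homologyMap (r • φ) i = r • homologyMap φ i :=
  ShortComplex.homologyMap_smul ((shortComplexFunctor C c i).map φ) r

end Linear

section Ext

variable {R : Type u} [CommRing R] {C : Type*} [Category C] [Abelian C] [Linear R C]

noncomputable def CategoryTheory.ProjectiveResolution.linearYonedaObjSmulHomotopyZero {X : C}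
    (P : ProjectiveResolution X) {r : R} (hr : r • 𝟙 X = 0) (Y : C) :
    Homotopy (r • 𝟙 (P.complex.linearYonedaObj R Y)) 0 := by
  have hsmul : Homotopy (r • 𝟙 P.complex) 0 := P.liftHomotopyZero _ (by
    ext : 1
    have hr₀ : r • 𝟙 (((ChainComplex.single₀ C).obj X).X 0) = 0 :=
      (HomologicalComplex.singleObjXSelf _ _ X).symm.smul_id_eq_zero hr
    simp only [HomologicalComplex.comp_f, HomologicalComplex.smul_f_apply,
      HomologicalComplex.id_f, HomologicalComplex.zero_f_apply]
    rw [Linear.smul_comp, Category.id_comp, ← Category.comp_id (P.π.f 0), ← Linear.comp_smul,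
      hr₀, Limits.comp_zero])
  refine (Homotopy.ofEq ?_).trans
    (((((linearYoneda R C).obj Y).rightOp).mapHomotopy hsmul).unop.trans (Homotopy.ofEq ?_))
  · ext n (f : P.complex.X n ⟶ Y)
    exact (by rw [Linear.smul_comp, Category.id_comp] :
      (r • 𝟙 (P.complex.X n)) ≫ f = r • f).symm
  · ext n (f : P.complex.X n ⟶ Y)
    exact (Limits.zero_comp : (0 : P.complex.X n ⟶ P.complex.X n) ≫ f = 0)

lemma Ext_smul_id_eq_zero [EnoughProjectives C] {X : C} {r : R} (hr : r • 𝟙 X = 0) (Y : C)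
    (n : ℕ) : r • 𝟙 (((Ext R C n).obj (op X)).obj Y) = 0 := by
  let P := projectiveResolution X
  refine (P.isoExt n Y).symm.smul_id_eq_zero (r := r) ?_
  rw [← HomologicalComplex.homologyMap_id (P.complex.linearYonedaObj R Y) n,
    ← HomologicalComplex.homologyMap_smul r,
    (P.linearYonedaObjSmulHomotopyZero hr Y).homologyMap_eq n, HomologicalComplex.homologyMap_zero]

end Ext

lemma ModuleCat.smul_id_eq_zero_iff {R : Type u} [CommRing R] {A : ModuleCat.{u} R} {r : R} :
    r • 𝟙 A = 0 ↔ Module.IsTorsionBy R A r := by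
  simp only [ModuleCat.hom_ext_iff, LinearMap.ext_iff, ModuleCat.hom_smul, ModuleCat.hom_id,
    ModuleCat.hom_zero, LinearMap.smul_apply, LinearMap.id_apply, LinearMap.zero_apply]

lemma ModuleCat.isTorsionBySet_Ext {R : Type u} [CommRing R] {A : ModuleCat.{u} R} {s : Set R}
    (h : Module.IsTorsionBySet R A s) (Y : ModuleCat.{u} R) (n : ℕ) :
    Module.IsTorsionBySet R (((Ext R (ModuleCat.{u} R) n).obj (op A)).obj Y) s := by
  intro x r
  have hA : (r : R) • 𝟙 A = 0 := smul_id_eq_zero_iff.mpr fun y => @h y r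
  exact smul_id_eq_zero_iff.mp (Ext_smul_id_eq_zero hA Y n) (x := x)

namespace Module.Finite

variable (R : Type u) [CommRing R] (N : Type u) [AddCommGroup N] [Module R N] [Module.Finite R N]

noncomputable def coverRank : ℕ := (exists_fin' R N).choose

noncomputable def cover : (Fin (coverRank R N) → R) →ₗ[R] N :=
  (exists_fin' R N).choose_spec.choose

lemma cover_surjective : Function.Surjective (cover R N) :=
  (exists_fin' R N).choose_spec.choose_spec

end Module.Finite

noncomputable section

namespace FiniteFreeResolution

open Module.Finite

variable (R : Type u) [CommRing R] [IsNoetherianRing R]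

def syzygyCover {k : ℕ} (K : Submodule R (Fin k → R)) :
    (Fin (coverRank R K) → R) →ₗ[R] (Fin k → R) :=
  K.subtype ∘ₗ cover R K

lemma range_syzygyCover {k : ℕ} (K : Submodule R (Fin k → R)) :
    LinearMap.range (syzygyCover R K) = K := by
  rw [syzygyCover, LinearMap.range_comp, LinearMap.range_eq_top.mpr (cover_surjective R K),
    Submodule.map_top, Submodule.range_subtype]

variable (A : Type u) [AddCommGroup A] [Module R A] [Module.Finite R A]

/-- The `n`-th syzygy `ker d_{n-1} ⊆ R^{k_n}` (with `d_{-1} = cover R A`), paired with `k_n`. -/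
def syzygy : ℕ → Σ k : ℕ, Submodule R (Fin k → R)
  | 0 => ⟨_, LinearMap.ker (cover R A)⟩
  | n + 1 => ⟨_, LinearMap.ker (syzygyCover R (syzygy n).2)⟩

abbrev rank (n : ℕ) : ℕ := (syzygy R A n).1

def d (n : ℕ) : (Fin (rank R A (n + 1)) → R) →ₗ[R] (Fin (rank R A n) → R) :=
  syzygyCover R (syzygy R A n).2

lemma range_d_succ (n : ℕ) : LinearMap.range (d R A (n + 1)) = LinearMap.ker (d R A n) :=
  range_syzygyCover R _

lemma range_d_zero : LinearMap.range (d R A 0) = LinearMap.ker (cover R A) :=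
  range_syzygyCover R _

def complex : ChainComplex (ModuleCat.{u} R) ℕ :=
  ChainComplex.of (fun n => ModuleCat.of R (Fin (rank R A n) → R))
    (fun n => ModuleCat.ofHom (d R A n))
    (fun n => ModuleCat.hom_ext (LinearMap.ext fun x =>
      (range_d_succ R A n).le (LinearMap.mem_range_self _ x)))

lemma complex_d (n : ℕ) : (complex R A).d (n + 1) n = ModuleCat.ofHom (d R A n) := by
  simp [complex]

def π : complex R A ⟶ (ChainComplex.single₀ (ModuleCat.{u} R)).obj (ModuleCat.of R A) :=
  (ChainComplex.toSingle₀Equiv _ _).symm ⟨ModuleCat.ofHom (cover R A), by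
    rw [complex_d]
    exact ModuleCat.hom_ext (LinearMap.ext fun x =>
      (range_d_zero R A).le (LinearMap.mem_range_self _ x))⟩

lemma complex_exactAt_succ (n : ℕ) : (complex R A).ExactAt (n + 1) := by
  rw [HomologicalComplex.exactAt_iff' _ (n + 2) (n + 1) n (by simp) (by simp),
    ShortComplex.moduleCat_exact_iff_range_eq_ker]
  simp only [HomologicalComplex.shortComplexFunctor'_obj_f,
    HomologicalComplex.shortComplexFunctor'_obj_g, complex_d]
  exact range_d_succ R A n

lemma quasiIsoAt_π_zero : QuasiIsoAt (π R A) 0 := by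
  rw [ChainComplex.quasiIsoAt₀_iff, ShortComplex.quasiIso_iff_of_zeros' _ rfl rfl rfl]
  have hπ : (π R A).f 0 = ModuleCat.ofHom (cover R A) :=
    ChainComplex.toSingle₀Equiv_symm_apply_f_zero _ _
  constructor
  · rw [ShortComplex.moduleCat_exact_iff_range_eq_ker]
    simp only [HomologicalComplex.shortComplexFunctor'_obj_f,
      HomologicalComplex.shortComplexFunctor'_map_τ₂, complex_d, hπ]
    exact range_d_zero R A
  · rw [ModuleCat.epi_iff_surjective]
    simp only [HomologicalComplex.shortComplexFunctor'_map_τ₂, hπ]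
    exact cover_surjective R A

def resolution : ProjectiveResolution (ModuleCat.of R A) where
  complex := complex R A
  projective n := ModuleCat.projective_of_free (Pi.basisFun R (Fin (rank R A n)))
  π := π R A
  quasiIso := ⟨fun n => by
    cases n with
    | zero => exact quasiIsoAt_π_zero R A
    | succ n =>
      rw [quasiIsoAt_iff_exactAt' _ _ (ChainComplex.exactAt_succ_single_obj _ _)]
      exact complex_exactAt_succ R A n⟩

end FiniteFreeResolution

end

lemma ModuleCat.exists_projectiveResolution_finite (R : Type u) [CommRing R] [IsNoetherianRing R]
    (A : Type u) [AddCommGroup A] [Module R A] [Module.Finite R A] :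
    ∃ P : ProjectiveResolution (ModuleCat.of R A), ∀ n, Module.Finite R (P.complex.X n) :=
  ⟨FiniteFreeResolution.resolution R A, fun n =>
    inferInstanceAs (Module.Finite R (Fin (FiniteFreeResolution.rank R A n) → R))⟩

lemma IsMinimax.Ext {R : Type u} [CommRing R] [IsNoetherianRing R] {M : Type u} [AddCommGroup M]
    [Module R M] (hM : IsMinimax R M) (A : Type u) [AddCommGroup A] [Module R A]
    [Module.Finite R A] (n : ℕ) :
    IsMinimax R (((Ext R (ModuleCat.{u} R) n).obj (op (ModuleCat.of R A))).obj
      (ModuleCat.of R M)) := by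
  obtain ⟨P, hP⟩ := ModuleCat.exists_projectiveResolution_finite R A
  have := hP n
  have hcochains : IsMinimax R ((P.complex.linearYonedaObj R (ModuleCat.of R M)).X n) :=
    hM.linearMap.of_linearEquiv
      (ModuleCat.homLinearEquiv (M := P.complex.X n) (N := ModuleCat.of R M) (S := R)).symm
  exact hcochains.homology.of_linearEquiv (P.isoExt n _).toLinearEquiv.symm

/-- Let `R` be a commutative noetherian ring and let `S` be a Serre class of `R`-modules such
that `R/m ∈ S` for every maximal ideal `m` of `R`. If `M` is a minimax `R`-module, then
`Ext^j_R(R/m, M) ∈ S` for every maximal ideal `m` of `R` and every integer `j ≥ 0`. -/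
theorem stmt3 (R : Type u) [CommRing R] [IsNoetherianRing R] (S : SerreClass R)
    (hS : ∀ m : Ideal R, m.IsMaximal → S.Mem (R ⧸ m))
    (M : Type u) [AddCommGroup M] [Module R M] (hM : IsMinimax R M)
    (m : Ideal R) (hm : m.IsMaximal) (j : ℕ) :
    S.Mem ↥(((Ext R (ModuleCat.{u} R) j).obj (op (ModuleCat.of R (R ⧸ m)))).obj
      (ModuleCat.of R M)) := by
  have hquotient : Module.IsTorsionBySet R (R ⧸ m) m :=
    (Module.isTorsionBySet_quotient_iff m m).mpr fun x _ hr => m.mul_mem_right x hr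
  have htorsion := ModuleCat.isTorsionBySet_Ext (A := ModuleCat.of R (R ⧸ m)) hquotient
    (ModuleCat.of R M) j
  have := htorsion.isSemisimpleModule
  exact S.mem_of_isFiniteLength hS m hm (hM.Ext (R ⧸ m) j).isFiniteLength
end
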